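/- Pairwise likelihood, one exceedance: let β, κ > 0, a₁, a₂, a₃ > 0 with a₁ + a₂ = a₂ + a₃ = α, let μ = Γ(a₁,β) ⊗ Γ(a₂,β) ⊗ Γ(a₃,β) on ℝ³, and set Λ₁ = s₁ + s₂, Λ₂ = s₂ + s₃. Then for every x ≥ 0, ∫_{ℝ³} Λ₁ e^{−(κ+x)Λ₁} (1 − e^{−κΛ₂}) dμ = (α/β)(1 + (κ+x)/β)^{−α−1} − (1/β)(1 + (κ+x)/β)^{−a₁−1} (1 + (2κ+x)/β)^{−a₂−1} (1 + κ/β)^{−a₃} · [ α(1 + (κ+x)/β) + a₁κ/β ]. -/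

import Mathlib

/-!
Under a Gamma law, multiplying by `exp (-t x)` is a change of rate `r ↦ r + t` (with factor
`(1 + t/r)^(-a)`, the Laplace transform), and multiplying by `x` is a change of shape
`a ↦ a + 1` (with factor `a/r`). Writing `1 - exp (-κ Λ₂)` as a difference, the integrand becomes
`Λ₁ exp (-(p S₁ + q S₂ + w S₃))` twice, and after splitting `Λ₁ = S₁ + S₂` each term is a product
of one-dimensional Gamma integrals of these two kinds.
-/

open MeasureTheory ProbabilityTheory Real

/-- The slice measure: product of three Gamma distributions with shapes
`a₁, a₂, a₃` and common rate `β`, the law of the slices of the trawl sets at two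
time points, with latent values `Λ₁ = S₁ + S₂`, `Λ₂ = S₂ + S₃`. -/
noncomputable def sliceMeasure (a₁ a₂ a₃ β : ℝ) : Measure (ℝ × ℝ × ℝ) :=
  (gammaMeasure a₁ β).prod ((gammaMeasure a₂ β).prod (gammaMeasure a₃ β))

namespace ProbabilityTheory

variable {a r : ℝ}

lemma integral_gammaMeasure (ha : 0 < a) (hr : 0 < r) (g : ℝ → ℝ) :
    ∫ x, g x ∂gammaMeasure a r = ∫ x, gammaPDFReal a r x * g x := by
  rw [gammaMeasure, integral_withDensity_eq_integral_toReal_smul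
    (show Measurable (gammaPDF a r) from (measurable_gammaPDFReal a r).ennreal_ofReal)
    (ae_of_all _ fun _ => ENNReal.ofReal_lt_top)]
  simp only [gammaPDF, ENNReal.toReal_ofReal (gammaPDFReal_nonneg ha hr _), smul_eq_mul]

lemma integrable_gammaMeasure_iff (ha : 0 < a) (hr : 0 < r) {g : ℝ → ℝ} :
    Integrable g (gammaMeasure a r) ↔ Integrable (fun x => gammaPDFReal a r x * g x) := by
  rw [gammaMeasure, integrable_withDensity_iff_integrable_smul'
    (show Measurable (gammaPDF a r) from (measurable_gammaPDFReal a r).ennreal_ofReal)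
    (ae_of_all _ fun _ => ENNReal.ofReal_lt_top)]
  simp only [gammaPDF, ENNReal.toReal_ofReal (gammaPDFReal_nonneg ha hr _), smul_eq_mul]

lemma gammaPDFReal_mul_exp_neg_mul {t : ℝ} (hr : 0 < r) (hrt : 0 < r + t) (x : ℝ) :
    gammaPDFReal a r x * exp (-t * x) = (1 + t / r) ^ (-a) * gammaPDFReal a (r + t) x := by
  rcases lt_or_ge x 0 with hx | hx
  · simp [gammaPDFReal, not_le.mpr hx]
  have hrate : (1 + t / r) ^ (-a) * (r + t) ^ a = r ^ a := by
    rw [show 1 + t / r = (r + t) / r by field_simp, rpow_neg (by positivity),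
      ← inv_rpow (by positivity), inv_div, div_rpow hr.le hrt.le,
      div_mul_cancel₀ _ (rpow_pos_of_pos hrt a).ne']
  simp only [gammaPDFReal, if_pos hx]
  rw [← hrate, mul_assoc _ _ (exp _), ← exp_add]
  ring_nf

lemma id_mul_gammaPDFReal (ha : a ≠ 0) (hr : r ≠ 0) (x : ℝ) :
    x * gammaPDFReal a r x = a / r * gammaPDFReal (a + 1) r x := by
  rcases lt_or_ge x 0 with hx | hx
  · simp [gammaPDFReal, not_le.mpr hx]
  simp only [gammaPDFReal, if_pos hx]
  rw [Gamma_add_one ha, rpow_add_one hr, add_sub_cancel_right,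
    show x ^ a = x ^ (a - 1) * x by rw [← rpow_add_one' hx (by simpa using ha)]; ring_nf]
  field_simp

instance instSFiniteGammaMeasure (a r : ℝ) : SFinite (gammaMeasure a r) := by
  unfold gammaMeasure; infer_instance

lemma integral_mul_exp_neg_mul_gammaMeasure {t : ℝ} (ha : 0 < a) (hr : 0 < r) (hrt : 0 < r + t)
    (g : ℝ → ℝ) :
    ∫ x, g x * exp (-t * x) ∂gammaMeasure a r =
      (1 + t / r) ^ (-a) * ∫ x, g x ∂gammaMeasure a (r + t) := by
  simp only [integral_gammaMeasure ha hr, integral_gammaMeasure ha hrt, ← integral_const_mul]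
  congr with x
  linear_combination g x * gammaPDFReal_mul_exp_neg_mul hr hrt x

lemma integrable_mul_exp_neg_mul_gammaMeasure_iff {t : ℝ} (ha : 0 < a) (hr : 0 < r)
    (hrt : 0 < r + t) {g : ℝ → ℝ} :
    Integrable (fun x => g x * exp (-t * x)) (gammaMeasure a r) ↔
      Integrable g (gammaMeasure a (r + t)) := by
  have hfun : (fun x => gammaPDFReal a r x * (g x * exp (-t * x))) =
      fun x => (1 + t / r) ^ (-a) * (gammaPDFReal a (r + t) x * g x) := funext fun x => by
    linear_combination g x * gammaPDFReal_mul_exp_neg_mul hr hrt x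
  have hc : 0 < (1 + t / r) ^ (-a) := rpow_pos_of_pos (by rw [one_add_div hr.ne']; positivity) _
  rw [integrable_gammaMeasure_iff ha hr, integrable_gammaMeasure_iff ha hrt, hfun,
    integrable_const_mul_iff hc.ne'.isUnit]

lemma integral_id_mul_gammaMeasure (ha : 0 < a) (hr : 0 < r) (g : ℝ → ℝ) :
    ∫ x, x * g x ∂gammaMeasure a r = a / r * ∫ x, g x ∂gammaMeasure (a + 1) r := by
  simp only [integral_gammaMeasure ha hr, integral_gammaMeasure (by linarith : 0 < a + 1) hr,
    ← integral_const_mul]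
  congr with x
  linear_combination g x * id_mul_gammaPDFReal ha.ne' hr.ne' x

lemma integrable_id_mul_gammaMeasure_iff (ha : 0 < a) (hr : 0 < r) {g : ℝ → ℝ} :
    Integrable (fun x => x * g x) (gammaMeasure a r) ↔ Integrable g (gammaMeasure (a + 1) r) := by
  have hfun : (fun x => gammaPDFReal a r x * (x * g x)) =
      fun x => a / r * (gammaPDFReal (a + 1) r x * g x) := funext fun x => by
    linear_combination g x * id_mul_gammaPDFReal ha.ne' hr.ne' x
  rw [integrable_gammaMeasure_iff ha hr, integrable_gammaMeasure_iff (by linarith) hr, hfun,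
    integrable_const_mul_iff (div_pos ha hr).ne'.isUnit]

lemma integral_exp_neg_mul_gammaMeasure {t : ℝ} (ha : 0 < a) (hr : 0 < r) (hrt : 0 < r + t) :
    ∫ x, exp (-t * x) ∂gammaMeasure a r = (1 + t / r) ^ (-a) := by
  have := isProbabilityMeasure_gammaMeasure ha hrt
  simpa using integral_mul_exp_neg_mul_gammaMeasure ha hr hrt (fun _ => 1)

lemma integrable_exp_neg_mul_gammaMeasure {t : ℝ} (ha : 0 < a) (hr : 0 < r) (hrt : 0 < r + t) :
    Integrable (fun x => exp (-t * x)) (gammaMeasure a r) := by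
  have := isProbabilityMeasure_gammaMeasure ha hrt
  simpa using (integrable_mul_exp_neg_mul_gammaMeasure_iff ha hr hrt (g := fun _ => 1)).mpr
    (integrable_const 1)

lemma integral_id_mul_exp_neg_mul_gammaMeasure {t : ℝ} (ha : 0 < a) (hr : 0 < r)
    (hrt : 0 < r + t) :
    ∫ x, x * exp (-t * x) ∂gammaMeasure a r = a / r * (1 + t / r) ^ (-a - 1) := by
  rw [integral_id_mul_gammaMeasure ha hr, integral_exp_neg_mul_gammaMeasure (by linarith) hr hrt,
    neg_add']

lemma integrable_id_mul_exp_neg_mul_gammaMeasure {t : ℝ} (ha : 0 < a) (hr : 0 < r)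
    (hrt : 0 < r + t) :
    Integrable (fun x => x * exp (-t * x)) (gammaMeasure a r) :=
  (integrable_id_mul_gammaMeasure_iff ha hr).mpr
    (integrable_exp_neg_mul_gammaMeasure (by linarith) hr hrt)

end ProbabilityTheory

lemma MeasureTheory.integral_prod_prod_mul {X Y Z : Type*} [MeasurableSpace X] [MeasurableSpace Y]
    [MeasurableSpace Z] {μ : Measure X} {ν : Measure Y} {ρ : Measure Z} [SFinite μ]
    [SFinite ν] [SFinite ρ] (f : X → ℝ) (g : Y → ℝ) (h : Z → ℝ) :
    ∫ z, f z.1 * (g z.2.1 * h z.2.2) ∂μ.prod (ν.prod ρ) =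
      (∫ x, f x ∂μ) * ((∫ y, g y ∂ν) * ∫ z, h z ∂ρ) := by
  rw [integral_prod_mul f (fun y : Y × Z => g y.1 * h y.2), integral_prod_mul g h]

section SliceMeasure

variable {a₁ a₂ a₃ β : ℝ}

lemma sum_mul_exp_neg_eq (p q w : ℝ) (s : ℝ × ℝ × ℝ) :
    (s.1 + s.2.1) * exp (-(p * s.1 + q * s.2.1 + w * s.2.2)) =
      s.1 * exp (-p * s.1) * (exp (-q * s.2.1) * exp (-w * s.2.2)) +
        exp (-p * s.1) * (s.2.1 * exp (-q * s.2.1) * exp (-w * s.2.2)) := by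
  have hexp : exp (-(p * s.1 + q * s.2.1 + w * s.2.2)) =
      exp (-p * s.1) * exp (-q * s.2.1) * exp (-w * s.2.2) := by
    simp only [← exp_add]; ring_nf
  rw [hexp]; ring

lemma integrable_sliceMeasure_sum_mul_exp_neg {p q w : ℝ} (ha₁ : 0 < a₁) (ha₂ : 0 < a₂)
    (ha₃ : 0 < a₃) (hβ : 0 < β) (hp : 0 < β + p) (hq : 0 < β + q) (hw : 0 < β + w) :
    Integrable (fun s : ℝ × ℝ × ℝ => (s.1 + s.2.1) * exp (-(p * s.1 + q * s.2.1 + w * s.2.2)))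
      (sliceMeasure a₁ a₂ a₃ β) := by
  simp_rw [sum_mul_exp_neg_eq]
  have hH := integrable_exp_neg_mul_gammaMeasure ha₃ hβ hw
  exact ((integrable_id_mul_exp_neg_mul_gammaMeasure ha₁ hβ hp).mul_prod
      ((integrable_exp_neg_mul_gammaMeasure ha₂ hβ hq).mul_prod hH)).add
    ((integrable_exp_neg_mul_gammaMeasure ha₁ hβ hp).mul_prod
      ((integrable_id_mul_exp_neg_mul_gammaMeasure ha₂ hβ hq).mul_prod hH))

lemma integral_sliceMeasure_sum_mul_exp_neg {p q w : ℝ} (ha₁ : 0 < a₁) (ha₂ : 0 < a₂)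
    (ha₃ : 0 < a₃) (hβ : 0 < β) (hp : 0 < β + p) (hq : 0 < β + q) (hw : 0 < β + w) :
    ∫ s, (s.1 + s.2.1) * exp (-(p * s.1 + q * s.2.1 + w * s.2.2)) ∂sliceMeasure a₁ a₂ a₃ β =
      (a₁ / β * (1 + p / β) ^ (-a₁ - 1) * (1 + q / β) ^ (-a₂) +
        (1 + p / β) ^ (-a₁) * (a₂ / β * (1 + q / β) ^ (-a₂ - 1))) * (1 + w / β) ^ (-a₃) := by
  simp_rw [sliceMeasure, sum_mul_exp_neg_eq]
  have hH := integrable_exp_neg_mul_gammaMeasure ha₃ hβ hw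
  rw [integral_add ((integrable_id_mul_exp_neg_mul_gammaMeasure ha₁ hβ hp).mul_prod
      ((integrable_exp_neg_mul_gammaMeasure ha₂ hβ hq).mul_prod hH))
    ((integrable_exp_neg_mul_gammaMeasure ha₁ hβ hp).mul_prod
      ((integrable_id_mul_exp_neg_mul_gammaMeasure ha₂ hβ hq).mul_prod hH)),
    integral_prod_prod_mul (fun x => x * exp (-p * x)) (fun y => exp (-q * y))
      (fun z => exp (-w * z)),
    integral_prod_prod_mul (fun x => exp (-p * x)) (fun y => y * exp (-q * y))
      (fun z => exp (-w * z)),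
    integral_exp_neg_mul_gammaMeasure ha₁ hβ hp, integral_exp_neg_mul_gammaMeasure ha₂ hβ hq,
    integral_exp_neg_mul_gammaMeasure ha₃ hβ hw,
    integral_id_mul_exp_neg_mul_gammaMeasure ha₁ hβ hp,
    integral_id_mul_exp_neg_mul_gammaMeasure ha₂ hβ hq]
  ring

end SliceMeasure

theorem pairwise_likelihood_one_exceedance_general (β κ a₁ a₂ a₃ α : ℝ)
    (hβ : 0 < β) (hκ : 0 < κ) (ha₁ : 0 < a₁) (ha₂ : 0 < a₂) (ha₃ : 0 < a₃)
    (hα₁ : a₁ + a₂ = α) :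
    ∀ x : ℝ, 0 ≤ x →
      (∫ s : ℝ × ℝ × ℝ,
          (s.1 + s.2.1) * Real.exp (-(κ + x) * (s.1 + s.2.1))
            * (1 - Real.exp (-κ * (s.2.1 + s.2.2)))
          ∂(sliceMeasure a₁ a₂ a₃ β))
        = (α / β) * (1 + (κ + x) / β) ^ (-α - 1)
          - (1 / β) * (1 + (κ + x) / β) ^ (-a₁ - 1)
              * (1 + (2 * κ + x) / β) ^ (-a₂ - 1) * (1 + κ / β) ^ (-a₃)
              * (α * (1 + (κ + x) / β) + a₁ * κ / β) := by
  intro x hx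
  have hβt : 0 < β + (κ + x) := by positivity
  have hβu : 0 < β + (2 * κ + x) := by positivity
  have hsplit (s : ℝ × ℝ × ℝ) :
      (s.1 + s.2.1) * exp (-(κ + x) * (s.1 + s.2.1)) * (1 - exp (-κ * (s.2.1 + s.2.2))) =
        (s.1 + s.2.1) * exp (-((κ + x) * s.1 + (κ + x) * s.2.1 + 0 * s.2.2)) -
          (s.1 + s.2.1) * exp (-((κ + x) * s.1 + (2 * κ + x) * s.2.1 + κ * s.2.2)) := by
    rw [mul_one_sub, mul_assoc, ← exp_add]; ring_nf
  simp_rw [hsplit]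
  rw [integral_sub
      (integrable_sliceMeasure_sum_mul_exp_neg ha₁ ha₂ ha₃ hβ hβt hβt (by simpa using hβ))
      (integrable_sliceMeasure_sum_mul_exp_neg ha₁ ha₂ ha₃ hβ hβt hβu (by positivity)),
    integral_sliceMeasure_sum_mul_exp_neg ha₁ ha₂ ha₃ hβ hβt hβt (by simpa using hβ),
    integral_sliceMeasure_sum_mul_exp_neg ha₁ ha₂ ha₃ hβ hβt hβu (by positivity)]
  have hA : 0 < 1 + (κ + x) / β := by positivity
  have hB : 0 < 1 + (2 * κ + x) / β := by positivity
  subst hα₁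
  simp only [zero_div, add_zero, one_rpow, mul_one, rpow_sub_one hA.ne', rpow_sub_one hB.ne',
    neg_add, rpow_add hA]
  field_simp
  ring

/-- Pairwise likelihood, one exceedance: with `Λ₁ = S₁ + S₂`, `Λ₂ = S₂ + S₃` in the
slice model, `a₁ + a₂ = a₂ + a₃ = α`, and `x ≥ 0`,
`E[Λ₁ e^{-(κ+x)Λ₁}(1 - e^{-κΛ₂})]`
`= (α/β)(1 + (κ+x)/β)^{-α-1}`
`- (1/β)(1 + (κ+x)/β)^{-a₁-1}(1 + (2κ+x)/β)^{-a₂-1}(1 + κ/β)^{-a₃}`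
`· [α(1 + (κ+x)/β) + a₁κ/β]`. -/
theorem pairwise_likelihood_one_exceedance (β κ a₁ a₂ a₃ α : ℝ)
    (hβ : 0 < β) (hκ : 0 < κ) (ha₁ : 0 < a₁) (ha₂ : 0 < a₂) (ha₃ : 0 < a₃)
    (hα₁ : a₁ + a₂ = α) (hα₂ : a₂ + a₃ = α) :
    ∀ x : ℝ, 0 ≤ x →
      (∫ s : ℝ × ℝ × ℝ,
          (s.1 + s.2.1) * Real.exp (-(κ + x) * (s.1 + s.2.1))
            * (1 - Real.exp (-κ * (s.2.1 + s.2.2)))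
          ∂(sliceMeasure a₁ a₂ a₃ β))
        = (α / β) * (1 + (κ + x) / β) ^ (-α - 1)
          - (1 / β) * (1 + (κ + x) / β) ^ (-a₁ - 1)
              * (1 + (2 * κ + x) / β) ^ (-a₂ - 1) * (1 + κ / β) ^ (-a₃)
              * (α * (1 + (κ + x) / β) + a₁ * κ / β) :=
  pairwise_likelihood_one_exceedance_general β κ a₁ a₂ a₃ α hβ hκ ha₁ ha₂ ha₃ hα₁
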